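/- arXiv:0901.0645 — 3 statements merged into one kernel-verified Lean document; each statement's English description precedes it below -/
import Mathlib

section
/- Let (g_i)_{i∈ℤ} be the circle on (g_1, g_0) in a group G. If the circle is finite of cardinality e (i.e. g_{i+e} = g_i for all i), then ⟨g_1 g_0⟩^e = ⟨g_0 g_1⟩^e, where ⟨ab⟩^e is the alternating product with e terms. -/
/-!
On a circle the products `g (i + 1) * g i` all equal `γ = g 1 * g 0`, so pairing factors from the
left shows `⟨g₁g₀⟩^n = g n * g (n - 1) * ⋯ * g 1`. Peeling off the first factor,
`⟨g₀g₁⟩^(n + 1) = g 0 * ⟨g₁g₀⟩^n = g 0 * g n * ⋯ * g 1`, which is `⟨g₁g₀⟩^(n + 1)` as soon as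
`g (n + 1) = g 0`.
-/

/-- The alternating product `⟨ab⟩^e = a b a b ⋯` with `e` factors. -/
def altProd {G : Type*} [Monoid G] (a b : G) : ℕ → G
  | 0 => 1
  | n + 1 => a * altProd b a n

section Monoid

variable {M : Type*} [Monoid M]

theorem altProd_add_two (a b : M) (n : ℕ) : altProd a b (n + 2) = a * b * altProd a b n := by
  rw [altProd, altProd, mul_assoc]

def descProd (f : ℕ → M) : ℕ → M
  | 0 => 1
  | n + 1 => f (n + 1) * descProd f n

theorem altProd_eq_descProd {f : ℕ → M} (hf : ∀ n, f (n + 2) * f (n + 1) = f 1 * f 0) :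
    ∀ n, altProd (f 1) (f 0) n = descProd f n
  | 0 => rfl
  | 1 => by simp only [altProd, descProd]
  | n + 2 => by
    rw [altProd_add_two, altProd_eq_descProd hf n, descProd, descProd, ← mul_assoc, hf]

theorem altProd_swap_of_periodic {f : ℕ → M} (hf : ∀ n, f (n + 2) * f (n + 1) = f 1 * f 0)
    {e : ℕ} (he : f e = f 0) : altProd (f 1) (f 0) e = altProd (f 0) (f 1) e := by
  cases e with
  | zero => rfl
  | succ n =>
    rw [altProd_eq_descProd hf, descProd, ← altProd_eq_descProd hf, he, altProd]

end Monoid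

section Circle

variable {G : Type*} [Group G] {g : ℤ → G}

theorem circle_mul_shift (hcirc : ∀ i : ℤ, g (i + 2) = g (i + 1) * g i * (g (i + 1))⁻¹) (i : ℤ) :
    g (i + 2) * g (i + 1) = g (i + 1) * g i := by
  rw [hcirc]
  group

theorem circle_mul_const (hcirc : ∀ i : ℤ, g (i + 2) = g (i + 1) * g i * (g (i + 1))⁻¹) (n : ℕ) :
    g (n + 1) * g n = g 1 * g 0 := by
  induction n with
  | zero => simp
  | succ n ih =>
    push_cast
    rw [add_assoc, one_add_one_eq_two, circle_mul_shift hcirc, ih]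

end Circle

/-- if the circle on `(g 1, g 0)` is `e`-periodic, then
`⟨g₁g₀⟩^e = ⟨g₀g₁⟩^e`. -/
theorem alt_rel_of_circle_period {G : Type*} [Group G] (g : ℤ → G)
    (hcirc : ∀ i : ℤ, g (i + 2) = g (i + 1) * g i * (g (i + 1))⁻¹)
    (e : ℕ) (hper : ∀ i : ℤ, g (i + e) = g i) :
    altProd (g 1) (g 0) e = altProd (g 0) (g 1) e := by
  have hconst (n : ℕ) : g ((n + 2 : ℕ) : ℤ) * g ((n + 1 : ℕ) : ℤ) = g 1 * g 0 := by
    simpa [add_assoc] using circle_mul_const hcirc (n + 1)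
  have hend : g (e : ℤ) = g 0 := by simpa using hper 0
  exact altProd_swap_of_periodic (f := fun n : ℕ => g n) hconst hend
end

section
/- Let (g_i)_{i∈ℤ} be the circle on (g_1, g_0) in a group G satisfying ⟨g_1 g_0⟩^e = ⟨g_0 g_1⟩^e. Then for every q ≥ 1, g_q = ⟨g_1 g_0⟩^q (⟨g_1 g_0⟩^{q-1})^{-1}. -/
lemma altProd_two_step {G : Type*} [Monoid G] (a b : G) (n : ℕ) :
    altProd a b (n + 2) = a * b * altProd a b n := by
  simp [altProd, mul_assoc]

/-- in a circle satisfying `⟨g₁g₀⟩^e = ⟨g₀g₁⟩^e`, for every `q ≥ 1`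
one has `g q = ⟨g₁g₀⟩^q (⟨g₁g₀⟩^{q-1})⁻¹`. -/
theorem circle_element_formula {G : Type*} [Group G] (g : ℤ → G)
    (hcirc : ∀ i : ℤ, g (i + 2) = g (i + 1) * g i * (g (i + 1))⁻¹)
    (e : ℕ) (h : altProd (g 1) (g 0) e = altProd (g 0) (g 1) e) :
    ∀ q : ℕ, 1 ≤ q → g (q : ℤ) = altProd (g 1) (g 0) q * (altProd (g 1) (g 0) (q - 1))⁻¹ := by
  have key : ∀ q : ℕ, g ((q : ℤ) + 1) =
      altProd (g 1) (g 0) (q + 1) * (altProd (g 1) (g 0) q)⁻¹ := by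
    intro q
    induction q using Nat.twoStepInduction with
    | zero => simp [altProd]
    | one =>
      have h0 := hcirc 0
      norm_num at h0 ⊢
      simp [altProd, h0, mul_assoc]
    | more n ih1 ih2 =>
      have hc := hcirc ((n : ℤ) + 1)
      have e1 : ((n : ℤ) + 1) + 2 = ((n + 2 : ℕ) : ℤ) + 1 := by push_cast; ring
      have e2 : ((n : ℤ) + 1) + 1 = ((n + 1 : ℕ) : ℤ) + 1 := by push_cast; ring
      rw [e1, e2] at hc
      rw [hc, ih1, ih2, altProd_two_step, altProd_two_step]
      group
  intro q hq
  obtain ⟨p, rfl⟩ : ∃ p, q = p + 1 := ⟨q - 1, (Nat.succ_pred_eq_of_pos hq).symm⟩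
  have := key p
  push_cast at this ⊢
  simpa using this
end

section
/- Let M be a cancellative monoid and β ∈ M such that there is a function φ : M → M with β x = φ(x) β for all x ∈ M. If φ is surjective, then φ is an automorphism of M, and β is balanced: an element x left-divides β (β = x z for some z) if and only if x right-divides β (β = z x for some z). -/
/-- in a cancellative monoid, if `β x = φ(x) β` for all `x` with `φ`
surjective, then `φ` is an automorphism and `β` is balanced. -/
theorem balanced_of_intertwining_surjective {M : Type*} [CancelMonoid M]
    (β : M) (φ : M → M) (hφ : ∀ x : M, β * x = φ x * β) (hsurj : Function.Surjective φ) :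
    Function.Bijective φ ∧ φ 1 = 1 ∧ (∀ x y : M, φ (x * y) = φ x * φ y) ∧
      (∀ x : M, (∃ z, β = x * z) ↔ (∃ z, β = z * x)) := by
  have hinj : Function.Injective φ := by
    intro x y h
    have : β * x = β * y := by rw [hφ x, hφ y, h]
    exact mul_left_cancel this
  refine ⟨⟨hinj, hsurj⟩, ?_, ?_, ?_⟩
  · have := hφ 1
    rw [mul_one] at this
    have h : φ 1 * β = 1 * β := by rw [one_mul]; exact this.symm
    exact mul_right_cancel h
  · intro x y
    have h1 : β * (x * y) = φ (x * y) * β := hφ (x * y)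
    have h2 : β * (x * y) = φ x * φ y * β := by
      rw [← mul_assoc, hφ x, mul_assoc, hφ y, mul_assoc]
    rw [h1] at h2
    exact mul_right_cancel h2
  · intro x
    constructor
    · rintro ⟨z, hz⟩
      refine ⟨φ z, ?_⟩
      have h1 : β * z = φ z * β := hφ z
      rw [hz] at h1
      -- x * z * z = φ z * (x * z)
      have : x * z * z = φ z * x * z := by rw [h1, mul_assoc]
      have h2 : x * z = φ z * x := mul_right_cancel this
      rw [hz, h2]
    · rintro ⟨z, hz⟩
      obtain ⟨w, hw⟩ := hsurj z
      refine ⟨w, ?_⟩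
      have h1 : β * w = z * β := by rw [hφ w, hw]
      rw [hz] at h1
      -- z * x * w = z * (z * x)
      have : z * (x * w) = z * (z * x) := by rw [← mul_assoc, h1]
      have h2 : x * w = z * x := mul_left_cancel this
      rw [hz, h2]
end
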